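/- arXiv:2306.10160 — 3 statements merged into one kernel-verified Lean document; each statement's English description precedes it below -/
import Mathlib

section
/- On the probability simplex Δ^1 ⊂ ℝ^2, the L^∞ norm score function s(p) = max(p_1, p_2) and the negative entropy score function ŝ(p) = p_1 log(p_1) + p_2 log(p_2) (with the convention 0·log 0 = 0) are order-isomorphic: for all p, q ∈ Δ^1, max(p_1,p_2) < max(q_1,q_2) ⟺ ŝ(p) < ŝ(q), and max(p_1,p_2) = max(q_1,q_2) ⟺ ŝ(p) = ŝ(q). -/
/-- Two score functions on the probability simplex `Δ^{k-1} ⊂ ℝ^k` are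
order-isomorphic if they induce the same (strict) ordering and the same
equalities on all pairs of points of the simplex. -/
def OrderIsomorphic (k : ℕ) (s sHat : (Fin k → ℝ) → ℝ) : Prop :=
  ∀ p ∈ stdSimplex ℝ (Fin k), ∀ q ∈ stdSimplex ℝ (Fin k),
    (s p < s q ↔ sHat p < sHat q) ∧ (s p = s q ↔ sHat p = sHat q)

/-!
On `Δ^1` both scores are functions of `m = max p₀ p₁ ∈ [1/2, 1]`: the other coordinate is
`1 - m`, so the negative entropy equals `-binEntropy m`. Binary entropy is strictly
decreasing on `[1/2, 1]`, hence the negative entropy is a strictly increasing function of the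
`L^∞` score.
-/

open Real Set

theorem OrderIsomorphic.of_eq_comp_strictMonoOn {k : ℕ} {s sHat : (Fin k → ℝ) → ℝ}
    {f : ℝ → ℝ} {I : Set ℝ} (hf : StrictMonoOn f I)
    (hs : ∀ p ∈ stdSimplex ℝ (Fin k), s p ∈ I)
    (hsHat : ∀ p ∈ stdSimplex ℝ (Fin k), sHat p = f (s p)) :
    OrderIsomorphic k s sHat := by
  intro p hp q hq
  rw [hsHat p hp, hsHat q hq]
  exact ⟨(hf.lt_iff_lt (hs p hp) (hs q hq)).symm, (hf.injOn.eq_iff (hs p hp) (hs q hq)).symm⟩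

lemma max_mem_Icc_of_mem_stdSimplex_fin_two {p : Fin 2 → ℝ} (hp : p ∈ stdSimplex ℝ (Fin 2)) :
    max (p 0) (p 1) ∈ Icc (2⁻¹ : ℝ) 1 := by
  obtain ⟨hnonneg, hsum⟩ := hp
  rw [Fin.sum_univ_two] at hsum
  have := hnonneg 0
  have := hnonneg 1
  exact ⟨by linarith [le_max_left (p 0) (p 1), le_max_right (p 0) (p 1)],
    max_le (by linarith) (by linarith)⟩

lemma negEntropy_eq_neg_binEntropy_max {p : Fin 2 → ℝ} (hp : p ∈ stdSimplex ℝ (Fin 2)) :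
    p 0 * log (p 0) + p 1 * log (p 1) = -binEntropy (max (p 0) (p 1)) := by
  have hsum : p 0 + p 1 = 1 := by simpa only [Fin.sum_univ_two] using hp.2
  rcases le_total (p 0) (p 1) with h | h
  · rw [max_eq_right h, binEntropy, show 1 - p 1 = p 0 by linarith, log_inv, log_inv]
    ring
  · rw [max_eq_left h, binEntropy, show 1 - p 0 = p 1 by linarith, log_inv, log_inv]
    ring

/- Note: `Real.log 0 = 0` in Mathlib, so `p i * Real.log (p i)` implements the
convention `0 · log 0 = 0`. -/
theorem linf_negEntropy_orderIsomorphic_binary :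
    OrderIsomorphic 2 (fun p => max (p 0) (p 1))
      (fun p => p 0 * Real.log (p 0) + p 1 * Real.log (p 1)) :=
  OrderIsomorphic.of_eq_comp_strictMonoOn binEntropy_strictAntiOn.neg
    (fun _ hp => max_mem_Icc_of_mem_stdSimplex_fin_two hp)
    (fun _ hp => negEntropy_eq_neg_binEntropy_max hp)
end

section
/- On the interior of the probability simplex Δ^1 ⊂ ℝ^2, the L^∞ norm score function s(p) = max(p_1, p_2) and the symmetrized Kullback–Leibler divergence to the uniform vector (which the paper calls the Jensen–Shannon distance to uniform), ŝ(p) = (1/2)·[p_1·log(p_1/(1/2)) + p_2·log(p_2/(1/2)) + (1/2)·log((1/2)/p_1) + (1/2)·log((1/2)/p_2)], are order-isomorphic: for all p, q ∈ Δ^1 with p_1, p_2, q_1, q_2 > 0, max(p_1,p_2) < max(q_1,q_2) ⟺ ŝ(p) < ŝ(q), and max(p_1,p_2) = max(q_1,q_2) ⟺ ŝ(p) = ŝ(q). -/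
/-!
Writing `b = 1 - a`, the score collapses to `½ (a - ½)(log a - log (1 - a))`, which is
invariant under `a ↦ 1 - a` and hence a function of `max a b ∈ [½, 1)`. On `[½, 1)` it is
the product of two nonnegative strictly increasing factors, so it is strictly increasing,
and an order isomorphism of the two scores follows.
-/

open Real Set

noncomputable def binarySymKL (t : ℝ) : ℝ := (1 / 2) * ((t - 1 / 2) * (log t - log (1 - t)))

lemma binarySymKL_one_sub (t : ℝ) : binarySymKL (1 - t) = binarySymKL t := by
  unfold binarySymKL
  rw [sub_sub_cancel]
  ring

lemma binarySymKL_strictMonoOn : StrictMonoOn binarySymKL (Ico (1 / 2) 1) := by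
  rintro a ⟨ha, -⟩ b ⟨-, hb⟩ hab
  have hlog_nonneg : log (1 - a) ≤ log a := log_le_log (by linarith) (by linarith)
  have hlog_lt : log a - log (1 - a) < log b - log (1 - b) := by
    have := log_lt_log (by linarith) hab
    have := log_lt_log (by linarith) (show 1 - b < 1 - a by linarith)
    linarith
  have := mul_lt_mul'' (show a - 1 / 2 < b - 1 / 2 by linarith) hlog_lt
    (by linarith) (by linarith)
  unfold binarySymKL
  linarith

lemma half_symKL_uniform_eq {a b : ℝ} (ha : 0 < a) (hb : 0 < b) (hab : a + b = 1) :
    (1 / 2) * (a * log (a / (1 / 2)) + b * log (b / (1 / 2))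
      + (1 / 2) * log ((1 / 2) / a) + (1 / 2) * log ((1 / 2) / b))
      = binarySymKL (max a b) := by
  have hsymm : binarySymKL a = binarySymKL b := by
    rw [← binarySymKL_one_sub b, show 1 - b = a by linarith]
  have hhalf : (1 / 2 : ℝ) ≠ 0 := by norm_num
  rw [log_div ha.ne' hhalf, log_div hb.ne' hhalf, log_div hhalf ha.ne', log_div hhalf hb.ne']
  obtain rfl : b = 1 - a := by linarith
  rcases le_total a (1 - a) with h | h
  · rw [max_eq_right h, ← hsymm]
    unfold binarySymKL
    ring
  · rw [max_eq_left h]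
    unfold binarySymKL
    ring

lemma max_mem_Ico_of_add_eq_one {a b : ℝ} (ha : 0 < a) (hb : 0 < b) (hab : a + b = 1) :
    max a b ∈ Ico (1 / 2 : ℝ) 1 :=
  ⟨le_max_iff.2 (by by_contra! h; linarith [h.1, h.2]),
    max_lt (by linarith) (by linarith)⟩

/-- Order-isomorphism on the interior of the binary probability simplex:
for all `p, q ∈ Δ^1` with strictly positive coordinates, the `L^∞` norm and
the symmetrized KL divergence to the uniform vector `(1/2, 1/2)` induce the
same ordering and equalities. -/
theorem linf_symKL_orderIsomorphic_binary_interior :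
    ∀ p ∈ stdSimplex ℝ (Fin 2), ∀ q ∈ stdSimplex ℝ (Fin 2),
      (∀ i, 0 < p i) → (∀ i, 0 < q i) →
      ((max (p 0) (p 1) < max (q 0) (q 1) ↔
          (1 / 2) * (p 0 * Real.log (p 0 / (1 / 2)) + p 1 * Real.log (p 1 / (1 / 2))
            + (1 / 2) * Real.log ((1 / 2) / p 0) + (1 / 2) * Real.log ((1 / 2) / p 1)) <
          (1 / 2) * (q 0 * Real.log (q 0 / (1 / 2)) + q 1 * Real.log (q 1 / (1 / 2))
            + (1 / 2) * Real.log ((1 / 2) / q 0) + (1 / 2) * Real.log ((1 / 2) / q 1))) ∧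
       (max (p 0) (p 1) = max (q 0) (q 1) ↔
          (1 / 2) * (p 0 * Real.log (p 0 / (1 / 2)) + p 1 * Real.log (p 1 / (1 / 2))
            + (1 / 2) * Real.log ((1 / 2) / p 0) + (1 / 2) * Real.log ((1 / 2) / p 1)) =
          (1 / 2) * (q 0 * Real.log (q 0 / (1 / 2)) + q 1 * Real.log (q 1 / (1 / 2))
            + (1 / 2) * Real.log ((1 / 2) / q 0) + (1 / 2) * Real.log ((1 / 2) / q 1)))) := by
  intro p hp q hq hp_pos hq_pos
  have hp_sum : p 0 + p 1 = 1 := by simpa [Fin.sum_univ_two] using hp.2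
  have hq_sum : q 0 + q 1 = 1 := by simpa [Fin.sum_univ_two] using hq.2
  have hp_mem := max_mem_Ico_of_add_eq_one (hp_pos 0) (hp_pos 1) hp_sum
  have hq_mem := max_mem_Ico_of_add_eq_one (hq_pos 0) (hq_pos 1) hq_sum
  rw [half_symKL_uniform_eq (hp_pos 0) (hp_pos 1) hp_sum,
    half_symKL_uniform_eq (hq_pos 0) (hq_pos 1) hq_sum]
  exact ⟨(binarySymKL_strictMonoOn.lt_iff_lt hp_mem hq_mem).symm,
    (binarySymKL_strictMonoOn.injOn.eq_iff hp_mem hq_mem).symm⟩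
end

section
/- (Ordering Lemma) Let s, ŝ : Δ^{k-1} → ℝ be order-isomorphic score functions, let X be a type, f : X → Δ^{k-1}, let D^s and D^t be nonempty finite sets of elements of X, and let Γ^s ∈ ℝ. For a score function u, define the estimate with threshold t on a finite set D as est_u(t, D) = |{x ∈ D : u(f(x)) < t}| / |D|. Suppose p ∈ D^s minimizes |Γ^s − est_s(s(f(q)), D^s)| over all q ∈ D^s. Then p also minimizes |Γ^s − est_{ŝ}(ŝ(f(q)), D^s)| over all q ∈ D^s, and the resulting target estimates agree: est_s(s(f(p)), D^t) = est_{ŝ}(ŝ(f(p)), D^t). -/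
open scoped Classical

/-- The ATC estimate: the fraction of points `x` of the finite set `D` whose
score `u (f x)` falls below the threshold `t`. -/
noncomputable def est {k : ℕ} {X : Type*} (u : (Fin k → ℝ) → ℝ)
    (f : X → (Fin k → ℝ)) (t : ℝ) (D : Finset X) : ℝ :=
  ((D.filter (fun x => u (f x) < t)).card : ℝ) / (D.card : ℝ)

theorem est_congr {k : ℕ} {X : Type*} {u v : (Fin k → ℝ) → ℝ} {f : X → (Fin k → ℝ)}
    {t t' : ℝ} {D : Finset X} (h : ∀ x ∈ D, u (f x) < t ↔ v (f x) < t') :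
    est u f t D = est v f t' D := by
  unfold est
  rw [Finset.filter_congr h]

theorem OrderIsomorphic.lt_iff {k : ℕ} {s sHat : (Fin k → ℝ) → ℝ}
    (hiso : OrderIsomorphic k s sHat) {p q : Fin k → ℝ}
    (hp : p ∈ stdSimplex ℝ (Fin k)) (hq : q ∈ stdSimplex ℝ (Fin k)) :
    s p < s q ↔ sHat p < sHat q :=
  (hiso p hp q hq).1

theorem OrderIsomorphic.est_score_eq {k : ℕ} {X : Type*} {s sHat : (Fin k → ℝ) → ℝ}
    (hiso : OrderIsomorphic k s sHat) {f : X → (Fin k → ℝ)}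
    (hf : ∀ x, f x ∈ stdSimplex ℝ (Fin k)) (q : X) (D : Finset X) :
    est s f (s (f q)) D = est sHat f (sHat (f q)) D :=
  est_congr fun x _ => hiso.lt_iff (hf x) (hf q)

theorem ordering_lemma_general {k : ℕ} {X : Type*}
    (s sHat : (Fin k → ℝ) → ℝ) (hiso : OrderIsomorphic k s sHat)
    (f : X → (Fin k → ℝ)) (hf : ∀ x, f x ∈ stdSimplex ℝ (Fin k))
    (Ds Dt : Finset X)
    (Γs : ℝ) (p : X)
    (hmin : ∀ q ∈ Ds, |Γs - est s f (s (f p)) Ds| ≤ |Γs - est s f (s (f q)) Ds|) :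
    (∀ q ∈ Ds, |Γs - est sHat f (sHat (f p)) Ds| ≤ |Γs - est sHat f (sHat (f q)) Ds|) ∧
    est s f (s (f p)) Dt = est sHat f (sHat (f p)) Dt := by
  have hest := hiso.est_score_eq hf
  refine ⟨fun q hq => ?_, hest p Dt⟩
  rw [← hest p Ds, ← hest q Ds]
  exact hmin q hq

/-- The Ordering Lemma: for order-isomorphic score functions, a minimizer of
the source-calibration objective for `s` is also a minimizer for `sHat`, and the
resulting target estimates agree. -/
theorem ordering_lemma {k : ℕ} {X : Type*}
    (s sHat : (Fin k → ℝ) → ℝ) (hiso : OrderIsomorphic k s sHat)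
    (f : X → (Fin k → ℝ)) (hf : ∀ x, f x ∈ stdSimplex ℝ (Fin k))
    (Ds Dt : Finset X) (hDs : Ds.Nonempty) (hDt : Dt.Nonempty)
    (Γs : ℝ) (p : X) (hp : p ∈ Ds)
    (hmin : ∀ q ∈ Ds, |Γs - est s f (s (f p)) Ds| ≤ |Γs - est s f (s (f q)) Ds|) :
    (∀ q ∈ Ds, |Γs - est sHat f (sHat (f p)) Ds| ≤ |Γs - est sHat f (sHat (f q)) Ds|) ∧
    est s f (s (f p)) Dt = est sHat f (sHat (f p)) Dt :=
  ordering_lemma_general s sHat hiso f hf Ds Dt Γs p hmin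
end
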